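/- arXiv:1006.3932 — 6 statements merged into one kernel-verified Lean document; each statement's English description precedes it below -/
import Mathlib

section
/- Let r, s, t be real numbers with r, t ≥ 0, and let φ(w) = (s + i(t-r))w² + (-s + i(t+r)) for w ∈ ℂ. Then |φ(0)|² = s² + (t+r)², and if w is any root of φ (with s + i(t-r) ≠ 0), then |w| ≥ 1. -/
/-! Since `r t ≥ 0`, the leading coefficient has modulus `√(s² + (t-r)²) ≤ √(s² + (t+r)²) = ‖φ 0‖`,
and a root `w` satisfies `‖w‖² = ‖φ 0‖ / ‖s + i(t-r)‖ ≥ 1`. -/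

open Complex

theorem one_le_norm_of_mul_pow_add_eq_zero {𝕜 : Type*} [NormedDivisionRing 𝕜] {a b w : 𝕜}
    {n : ℕ} (hn : n ≠ 0) (ha : a ≠ 0) (hab : ‖a‖ ≤ ‖b‖) (hw : a * w ^ n + b = 0) :
    1 ≤ ‖w‖ := by
  have hnorm : ‖a‖ * ‖w‖ ^ n = ‖b‖ := by
    rw [← norm_pow, ← norm_mul, eq_neg_of_add_eq_zero_left hw, norm_neg]
  have hpow : 1 ≤ ‖w‖ ^ n := by
    refine le_of_mul_le_mul_left ?_ (norm_pos_iff.mpr ha)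
    rwa [mul_one, hnorm]
  exact (one_le_pow_iff_of_nonneg (norm_nonneg w) hn).mp hpow

theorem sq_norm_ofReal_add_I_mul (x y : ℝ) : ‖(x : ℂ) + I * y‖ ^ 2 = x ^ 2 + y ^ 2 := by
  rw [mul_comm, Complex.sq_norm, normSq_add_mul_I]

theorem phi_abs_zero_and_roots (r s t : ℝ) (hr : 0 ≤ r) (ht : 0 ≤ t)
    (φ : ℂ → ℂ)
    (hφ : ∀ w : ℂ, φ w = ((s : ℂ) + Complex.I * ((t : ℂ) - r)) * w ^ 2
        + (-(s : ℂ) + Complex.I * ((t : ℂ) + r)))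
    (hc : (s : ℂ) + Complex.I * ((t : ℂ) - r) ≠ 0) :
    ‖φ 0‖ ^ 2 = s ^ 2 + (t + r) ^ 2 ∧
      ∀ w : ℂ, φ w = 0 → 1 ≤ ‖w‖ := by
  have hlead := sq_norm_ofReal_add_I_mul s (t - r)
  have hconst := sq_norm_ofReal_add_I_mul (-s) (t + r)
  push_cast at hlead hconst
  have hφ0 : φ 0 = -(s : ℂ) + I * ((t : ℂ) + r) := by simp [hφ]
  refine ⟨by rw [hφ0, hconst, neg_sq], fun w hw => ?_⟩
  refine one_le_norm_of_mul_pow_add_eq_zero two_ne_zero hc ?_ ((hφ w).symm.trans hw)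
  rw [← pow_le_pow_iff_left₀ (norm_nonneg _) (norm_nonneg _) two_ne_zero, hlead, hconst]
  nlinarith [mul_nonneg hr ht]
end

section
/- Let r, s, t be real numbers with r² + s² + t² = 1, r, t > 0, and let φ(w) = (s + i(t-r))w² + (-s + i(t+r)). Then (1/2π) ∫₀^{2π} log|φ(e^{iθ})| dθ = (1/2) log(1 + 2rt). -/
open Complex Real

lemma circleAverage_zero_one_eq (f : ℂ → ℝ) :
    circleAverage f 0 1 = (1 / (2 * π)) * ∫ θ in (0:ℝ)..(2 * π), f (exp (θ * I)) := by
  simp [circleAverage_def, circleMap_zero]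

lemma circleAverage_log_norm_mul_pow_add {a b : ℂ} {n : ℕ} (hn : n ≠ 0) (hab : ‖a‖ < ‖b‖) :
    circleAverage (fun w ↦ Real.log ‖a * w ^ n + b‖) 0 1 = Real.log ‖b‖ := by
  have hne : ∀ w ∈ Metric.closedBall (0 : ℂ) |1|, a * w ^ n + b ≠ 0 := by
    intro w hw h
    have hw : ‖w‖ ≤ 1 := by simpa using hw
    have : ‖b‖ ≤ ‖a‖ := calc
      ‖b‖ = ‖a * w ^ n‖ := by rw [eq_neg_of_add_eq_zero_right h, norm_neg]
      _ = ‖a‖ * ‖w‖ ^ n := by rw [norm_mul, norm_pow]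
      _ ≤ ‖a‖ := mul_le_of_le_one_right (norm_nonneg a) (pow_le_one₀ (norm_nonneg w) hw)
    exact this.not_gt hab
  simpa [zero_pow hn] using
    AnalyticOnNhd.circleAverage_log_norm_of_ne_zero (fun z _ ↦ by fun_prop) hne

theorem jensen_circle_average (r s t : ℝ) (h : r ^ 2 + s ^ 2 + t ^ 2 = 1)
    (hr : 0 < r) (ht : 0 < t)
    (φ : ℂ → ℂ)
    (hφ : ∀ w : ℂ, φ w = ((s : ℂ) + Complex.I * ((t : ℂ) - r)) * w ^ 2
        + (-(s : ℂ) + Complex.I * ((t : ℂ) + r))) :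
    (1 / (2 * π)) * ∫ θ in (0:ℝ)..(2 * π),
        Real.log ‖φ (Complex.exp (θ * Complex.I))‖
      = (1 / 2) * Real.log (1 + 2 * r * t) := by
  set a : ℂ := (s : ℂ) + I * ((t : ℂ) - r)
  set b : ℂ := -(s : ℂ) + I * ((t : ℂ) + r)
  have ha : ‖a‖ ^ 2 = 1 - 2 * r * t := by
    rw [show a = s + ((t - r : ℝ) : ℂ) * I by push_cast; ring, Complex.sq_norm, normSq_add_mul_I]
    linear_combination h
  have hb : ‖b‖ ^ 2 = 1 + 2 * r * t := by
    rw [show b = ((-s : ℝ) : ℂ) + ((t + r : ℝ) : ℂ) * I by push_cast; ring, Complex.sq_norm,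
      normSq_add_mul_I]
    linear_combination h
  have hab : ‖a‖ < ‖b‖ := by
    refine lt_of_pow_lt_pow_left₀ 2 (norm_nonneg b) ?_
    rw [ha, hb]; linarith [mul_pos hr ht]
  rw [← circleAverage_zero_one_eq (fun w ↦ Real.log ‖φ w‖), show φ = fun w ↦ a * w ^ 2 + b
    from funext hφ, circleAverage_log_norm_mul_pow_add two_ne_zero hab, ← hb, Real.log_pow]
  push_cast; ring
end

section
/- For z = (z₁,...,z_m) ∈ ℂ^m with Im z ≠ 0 (i.e., z ∉ ℝ^m), the quantity |1 + z·z| / (1 + ‖z‖²) is strictly less than 1, where z·z = z₁² + ⋯ + z_m² and ‖z‖² = |z₁|² + ⋯ + |z_m|². -/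
/-!
Write `P = ∑ (Re zᵢ)²`, `Q = ∑ (Im zᵢ)²` and `R = ∑ Re zᵢ Im zᵢ`. Then
`|1 + z·z|² = (1 + P - Q)² + 4R²` and `1 + ‖z‖² = 1 + P + Q`. Cauchy–Schwarz gives `R² ≤ PQ`, so
`|1 + z·z|² ≤ (1 + P - Q)² + 4PQ = (1 + P + Q)² - 4Q`, which is strictly smaller than
`(1 + ‖z‖²)²` as soon as `Q > 0`, i.e. as soon as `z ∉ ℝᵐ`.
-/

open Complex Finset

section
variable {ι : Type*} (s : Finset ι) (z : ι → ℂ)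

lemma re_sum_sq : (∑ i ∈ s, z i ^ 2).re = ∑ i ∈ s, (z i).re ^ 2 - ∑ i ∈ s, (z i).im ^ 2 := by
  rw [re_sum, ← sum_sub_distrib]
  exact sum_congr rfl fun i _ => by rw [sq, mul_re]; ring

lemma im_sum_sq : (∑ i ∈ s, z i ^ 2).im = 2 * ∑ i ∈ s, (z i).re * (z i).im := by
  rw [im_sum, mul_sum]
  exact sum_congr rfl fun i _ => by rw [sq, mul_im]; ring

lemma sum_norm_sq : ∑ i ∈ s, ‖z i‖ ^ 2 = ∑ i ∈ s, (z i).re ^ 2 + ∑ i ∈ s, (z i).im ^ 2 := by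
  rw [← sum_add_distrib]
  exact sum_congr rfl fun i _ => by rw [Complex.sq_norm, normSq_apply]; ring

end

lemma sq_one_add_sub_add_sq_lt {P Q R : ℝ} (hQ : 0 < Q) (hR : R ^ 2 ≤ P * Q) :
    (1 + (P - Q)) ^ 2 + (2 * R) ^ 2 < (1 + (P + Q)) ^ 2 := by
  nlinarith

theorem norm_one_add_sum_sq_lt {ι : Type*} (s : Finset ι) (z : ι → ℂ)
    (hz : ∃ i ∈ s, (z i).im ≠ 0) :
    ‖1 + ∑ i ∈ s, z i ^ 2‖ < 1 + ∑ i ∈ s, ‖z i‖ ^ 2 := by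
  have hQ : 0 < ∑ i ∈ s, (z i).im ^ 2 := by
    obtain ⟨i, hi, him⟩ := hz
    exact sum_pos' (fun _ _ => sq_nonneg _) ⟨i, hi, by positivity⟩
  have hR := sum_mul_sq_le_sq_mul_sq s (fun i => (z i).re) (fun i => (z i).im)
  rw [sum_norm_sq]
  refine lt_of_pow_lt_pow_left₀ 2 (by positivity) ?_
  rw [Complex.sq_norm, normSq_apply, add_re, add_im, one_re, one_im, zero_add, re_sum_sq, im_sum_sq,
    ← sq, ← sq]
  exact sq_one_add_sub_add_sq_lt hQ hR

theorem ratio_lt_one_several_vars (m : ℕ) (z : Fin m → ℂ)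
    (hz : ∃ i, (z i).im ≠ 0) :
    ‖1 + ∑ i, (z i) ^ 2‖ / (1 + ∑ i, (‖z i‖) ^ 2) < 1 := by
  obtain ⟨i, hi⟩ := hz
  rw [div_lt_one (by positivity)]
  exact norm_one_add_sum_sq_lt univ z ⟨i, mem_univ i, hi⟩
end

section
/- For z ∈ ℂ and N ∈ ℕ, with F_N(z) = (binom(N,ℓ)^{1/2} z^ℓ)_{ℓ=0}^N, one has ‖Re F_N(z)‖² / ‖F_N(z)‖² = 1/2 + (1/2) Re((1+z²)/(1+|z|²))^N, where Re F_N(z) denotes the vector of real parts of the entries of F_N(z). -/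
open Complex Finset

/-!
Write `w_ℓ = √(N choose ℓ) z^ℓ`. For every complex `w` one has `(Re w)² = (‖w‖² + Re (w²)) / 2`,
and both `‖w_ℓ‖² = (N choose ℓ) (‖z‖²)^ℓ` and `w_ℓ² = (N choose ℓ) (z²)^ℓ` are binomial terms, so
the binomial theorem sums the denominator to `(1 + ‖z‖²)^N` and the numerator to
`((1 + ‖z‖²)^N + Re (1 + z²)^N) / 2`.
-/

theorem Complex.re_sq_eq (w : ℂ) : w.re ^ 2 = (‖w‖ ^ 2 + (w ^ 2).re) / 2 := by
  rw [Complex.sq_norm, normSq_apply, sq, sq, mul_re]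
  ring

theorem sum_range_choose_mul_pow {R : Type*} [CommSemiring R] (x : R) (N : ℕ) :
    ∑ ℓ ∈ range (N + 1), (N.choose ℓ : R) * x ^ ℓ = (1 + x) ^ N := by
  rw [add_comm (1 : R), add_pow]
  simp only [one_pow, mul_one, mul_comm]

theorem sq_norm_ofReal_sqrt_mul {a : ℝ} (ha : 0 ≤ a) (w : ℂ) :
    ‖(Real.sqrt a : ℂ) * w‖ ^ 2 = a * ‖w‖ ^ 2 := by
  rw [norm_mul, mul_pow, norm_real, Real.norm_eq_abs, sq_abs, Real.sq_sqrt ha]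

theorem sq_ofReal_sqrt_mul {a : ℝ} (ha : 0 ≤ a) (w : ℂ) :
    ((Real.sqrt a : ℂ) * w) ^ 2 = a * w ^ 2 := by
  rw [mul_pow, ← ofReal_pow, Real.sq_sqrt ha]

theorem sum_sq_norm_sqrt_choose_mul_pow (z : ℂ) (N : ℕ) :
    ∑ ℓ ∈ range (N + 1), ‖(Real.sqrt (N.choose ℓ) : ℂ) * z ^ ℓ‖ ^ 2 = (1 + ‖z‖ ^ 2) ^ N := by
  rw [← sum_range_choose_mul_pow]
  refine sum_congr rfl fun ℓ _ => ?_
  rw [sq_norm_ofReal_sqrt_mul (Nat.cast_nonneg _), norm_pow, ← pow_mul, ← pow_mul, mul_comm ℓ]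

theorem sum_sq_sqrt_choose_mul_pow (z : ℂ) (N : ℕ) :
    ∑ ℓ ∈ range (N + 1), ((Real.sqrt (N.choose ℓ) : ℂ) * z ^ ℓ) ^ 2 = (1 + z ^ 2) ^ N := by
  rw [← sum_range_choose_mul_pow]
  refine sum_congr rfl fun ℓ _ => ?_
  rw [sq_ofReal_sqrt_mul (Nat.cast_nonneg _), ← pow_mul, ← pow_mul, mul_comm ℓ, ofReal_natCast]

theorem sum_re_sq_eq_half_add {ι : Type*} (s : Finset ι) (w : ι → ℂ) :
    ∑ i ∈ s, (w i).re ^ 2 = ((∑ i ∈ s, ‖w i‖ ^ 2) + (∑ i ∈ s, w i ^ 2).re) / 2 := by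
  simp only [Complex.re_sq_eq, ← sum_div, sum_add_distrib, re_sum]

theorem real_part_norm_ratio (z : ℂ) (N : ℕ) :
    (∑ ℓ ∈ Finset.range (N + 1),
        (((Real.sqrt (N.choose ℓ) : ℂ) * z ^ ℓ).re) ^ 2) /
      (∑ ℓ ∈ Finset.range (N + 1),
        (‖(Real.sqrt (N.choose ℓ) : ℂ) * z ^ ℓ‖) ^ 2)
      = 1 / 2 + (1 / 2) * (((1 + z ^ 2) / (1 + ((‖z‖ : ℝ) : ℂ) ^ 2)) ^ N).re := by
  have hD : (0 : ℝ) < (1 + ‖z‖ ^ 2) ^ N := by positivity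
  have hRHS : (((1 + z ^ 2) / (1 + ((‖z‖ : ℝ) : ℂ) ^ 2)) ^ N).re =
      ((1 + z ^ 2) ^ N).re / (1 + ‖z‖ ^ 2) ^ N := by
    rw [div_pow, ← div_ofReal_re]
    push_cast
    rfl
  rw [sum_re_sq_eq_half_add, sum_sq_norm_sqrt_choose_mul_pow, sum_sq_sqrt_choose_mul_pow, hRHS]
  field_simp
end

section
/- For real y ≠ 0, define g(y) = log(1 + √(1 - e^{-4y²})). Then (1/(4π)) g''(y) + 1/π = (1/π) · (1 - (4y² + 1)e^{-4y²}) / (1 - e^{-4y²})^{3/2}. -/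
/-!
Write `q = 1 - e^{-4x²}`, so `q' = 8x e^{-4x²} = 8x (1 - q)`. The chain rule gives
`g' = q' / (2√q (1 + √q))`, and since `1 - q = (1 - √q)(1 + √q)` this collapses to
`g' = 4x (1/√q - 1)`. One more differentiation gives
`g'' = 4 (q - 4x² e^{-4x²}) / q^{3/2} - 4 = 4 (1 - (4x² + 1) e^{-4x²}) / q^{3/2} - 4`.
-/

open Real Filter Topology

lemma HasDerivAt.log_one_add_sqrt {f : ℝ → ℝ} {f' x : ℝ} (hf : HasDerivAt f f' x)
    (hx : 0 < f x) :
    HasDerivAt (fun y => Real.log (1 + √(f y))) (f' / (2 * √(f x)) / (1 + √(f x))) x :=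
  ((hf.sqrt hx.ne').const_add 1).log (by positivity)

lemma rpow_three_halves_eq_mul_sqrt {t : ℝ} (ht : 0 ≤ t) : t ^ ((3 : ℝ) / 2) = t * √t := by
  rw [show (3 : ℝ) / 2 = 1 + 1 / 2 by norm_num, rpow_add' ht (by norm_num), rpow_one,
    sqrt_eq_rpow]

lemma one_sub_exp_neg_four_mul_sq_pos {x : ℝ} (hx : x ≠ 0) : 0 < 1 - exp (-4 * x ^ 2) :=
  sub_pos.2 (exp_lt_one_iff.2 (by nlinarith [sq_pos_of_ne_zero hx]))

lemma hasDerivAt_one_sub_exp_neg_four_mul_sq (x : ℝ) :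
    HasDerivAt (fun x => 1 - exp (-4 * x ^ 2)) (8 * x * exp (-4 * x ^ 2)) x := by
  refine ((((hasDerivAt_pow 2 x).const_mul (-4)).exp).const_sub 1).congr_deriv ?_
  push_cast
  ring

lemma hasDerivAt_log_one_add_sqrt_one_sub_exp {x : ℝ} (hx : x ≠ 0) :
    HasDerivAt (fun x => log (1 + √(1 - exp (-4 * x ^ 2))))
      (4 * x / √(1 - exp (-4 * x ^ 2)) - 4 * x) x := by
  have hq := one_sub_exp_neg_four_mul_sq_pos hx
  refine ((hasDerivAt_one_sub_exp_neg_four_mul_sq x).log_one_add_sqrt hq).congr_deriv ?_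
  have hs2 := sq_sqrt hq.le
  have hs : 0 < √(1 - exp (-4 * x ^ 2)) := sqrt_pos.2 hq
  -- abstracting the atoms stops `field_simp` from rewriting inside `exp` in the goal only
  generalize √(1 - exp (-4 * x ^ 2)) = s at hs hs2 ⊢
  generalize exp (-4 * x ^ 2) = u at hs2 ⊢
  field_simp
  linear_combination 8 * hs2

lemma deriv_log_one_add_sqrt_one_sub_exp_eventuallyEq {y : ℝ} (hy : y ≠ 0) :
    deriv (fun x => log (1 + √(1 - exp (-4 * x ^ 2))))
      =ᶠ[𝓝 y] fun x => 4 * x / √(1 - exp (-4 * x ^ 2)) - 4 * x := by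
  filter_upwards [isOpen_ne.mem_nhds hy] with x hx
  exact (hasDerivAt_log_one_add_sqrt_one_sub_exp hx).deriv

lemma deriv_deriv_log_one_add_sqrt_one_sub_exp {y : ℝ} (hy : y ≠ 0) :
    deriv (deriv fun x => log (1 + √(1 - exp (-4 * x ^ 2)))) y
      = 4 * (1 - (4 * y ^ 2 + 1) * exp (-4 * y ^ 2)) / (1 - exp (-4 * y ^ 2)) ^ ((3 : ℝ) / 2)
        - 4 := by
  have hq := one_sub_exp_neg_four_mul_sq_pos hy
  have hlin : HasDerivAt (fun x : ℝ => 4 * x) 4 y := by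
    simpa using (hasDerivAt_id y).const_mul (4 : ℝ)
  have hsqrt := (hasDerivAt_one_sub_exp_neg_four_mul_sq y).sqrt hq.ne'
  have hs : 0 < √(1 - exp (-4 * y ^ 2)) := sqrt_pos.2 hq
  rw [(deriv_log_one_add_sqrt_one_sub_exp_eventuallyEq hy).deriv_eq]
  refine (((hlin.div hsqrt hs.ne').sub hlin).congr_deriv ?_).deriv
  rw [rpow_three_halves_eq_mul_sqrt hq.le]
  have hs2 := sq_sqrt hq.le
  generalize √(1 - exp (-4 * y ^ 2)) = s at hs hs2 ⊢
  generalize exp (-4 * y ^ 2) = u at hq hs2 ⊢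
  field_simp
  linear_combination 8 * y ^ 2 * u * hs2

theorem scaled_density_formula (y : ℝ) (hy : y ≠ 0) :
    (1 / (4 * π)) *
        deriv (deriv (fun x : ℝ => Real.log (1 + Real.sqrt (1 - Real.exp (-4 * x ^ 2))))) y
      + 1 / π
      = (1 / π) * ((1 - (4 * y ^ 2 + 1) * Real.exp (-4 * y ^ 2)) /
          (1 - Real.exp (-4 * y ^ 2)) ^ ((3 : ℝ) / 2)) := by
  rw [deriv_deriv_log_one_add_sqrt_one_sub_exp hy]
  field_simp
  ring
end

section
/- For y ∈ ℝ^m \ {0}, the second partial derivatives of h(y) = (1/2) log(1 + √(1 - e^{-4‖y‖²})) satisfy ∂²h/∂y_j∂y_k (y) = O(1/‖y‖) as y → 0; that is, there exist C, δ > 0 such that |∂²h/∂y_j∂y_k(y)| ≤ C/‖y‖ for 0 < ‖y‖ < δ. -/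
/-!
Write `h(y) = φ(‖y‖²)` with `φ(t) = ½ log(1 + s(t))`, `s(t) = √(1 - e^{-4t})`. Since
`e^{-4t} = (1 - s)(1 + s)`, one gets `φ' = 1/s - 1` and `φ'' = -2 e^{-4t} / s³`, while
`s(t) ≥ √t` for small `t`. The Hessian of a radial function is
`2 φ'(‖y‖²) δ_{jk} + 4 φ''(‖y‖²) y_j y_k`, and both terms are `O(1/‖y‖)`.
-/

open Real
open scoped RealInnerProductSpace

section Radial

variable {E : Type*} [NormedAddCommGroup E] [InnerProductSpace ℝ E]

theorem HasDerivAt.hasFDerivAt_comp_norm_sq {φ : ℝ → ℝ} {d : ℝ} {x : E}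
    (h : HasDerivAt φ d (‖x‖ ^ 2)) :
    HasFDerivAt (fun w => φ (‖w‖ ^ 2)) (d • 2 • innerSL ℝ x) x :=
  h.comp_hasFDerivAt x (hasStrictFDerivAt_norm_sq x).hasFDerivAt

theorem fderiv_comp_norm_sq_apply {φ φ' : ℝ → ℝ} {x : E} (v : E)
    (hφ : HasDerivAt φ (φ' (‖x‖ ^ 2)) (‖x‖ ^ 2)) :
    fderiv ℝ (fun w => φ (‖w‖ ^ 2)) x v = 2 * φ' (‖x‖ ^ 2) * ⟪x, v⟫ := by
  rw [hφ.hasFDerivAt_comp_norm_sq.fderiv]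
  simp only [smul_apply, innerSL_apply_apply, smul_eq_mul, nsmul_eq_mul]
  push_cast; ring

theorem fderiv_fderiv_comp_norm_sq_apply {φ φ' φ'' : ℝ → ℝ} {y : E} (hy : y ≠ 0) (u v : E)
    (hφ : ∀ t, 0 < t → HasDerivAt φ (φ' t) t)
    (hφ' : HasDerivAt φ' (φ'' (‖y‖ ^ 2)) (‖y‖ ^ 2)) :
    fderiv ℝ (fun x => fderiv ℝ (fun w => φ (‖w‖ ^ 2)) x v) y u =
      2 * φ' (‖y‖ ^ 2) * ⟪u, v⟫ + 4 * φ'' (‖y‖ ^ 2) * ⟪y, u⟫ * ⟪y, v⟫ := by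
  have h_eq : (fun x => fderiv ℝ (fun w => φ (‖w‖ ^ 2)) x v)
      =ᶠ[nhds y] fun x => 2 * φ' (‖x‖ ^ 2) * ⟪x, v⟫ := by
    filter_upwards [eventually_ne_nhds hy] with x hx
    exact fderiv_comp_norm_sq_apply v (hφ _ (by positivity))
  have h_deriv : HasFDerivAt (fun x => 2 * φ' (‖x‖ ^ 2) * ⟪x, v⟫) _ y :=
    (hφ'.hasFDerivAt_comp_norm_sq.const_mul 2).mul ((innerSL ℝ (E := E)).flip v).hasFDerivAt
  rw [h_eq.fderiv_eq, h_deriv.fderiv]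
  simp only [add_apply, smul_apply, ContinuousLinearMap.flip_apply, innerSL_apply_apply,
    smul_eq_mul, nsmul_eq_mul]
  push_cast
  rw [real_inner_comm u y]
  ring

theorem abs_fderiv_fderiv_comp_norm_sq_apply_le {φ φ' φ'' : ℝ → ℝ} {y : E} (hy : y ≠ 0)
    (u v : E) {A B : ℝ} (hφ : ∀ t, 0 < t → HasDerivAt φ (φ' t) t)
    (hφ' : HasDerivAt φ' (φ'' (‖y‖ ^ 2)) (‖y‖ ^ 2))
    (hA : |φ' (‖y‖ ^ 2)| ≤ A / ‖y‖) (hB : |φ'' (‖y‖ ^ 2)| ≤ B / ‖y‖ ^ 3) :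
    |fderiv ℝ (fun x => fderiv ℝ (fun w => φ (‖w‖ ^ 2)) x v) y u| ≤
      (2 * A + 4 * B) * ‖u‖ * ‖v‖ / ‖y‖ := by
  have hy₀ : 0 < ‖y‖ := norm_pos_iff.2 hy
  have hA₀ : 0 ≤ A := by
    have := (abs_nonneg _).trans hA; rwa [le_div_iff₀ hy₀, zero_mul] at this
  have hB₀ : 0 ≤ B := by
    have := (abs_nonneg _).trans hB; rwa [le_div_iff₀ (by positivity), zero_mul] at this
  have huv := abs_real_inner_le_norm u v
  have hyu := abs_real_inner_le_norm y u
  have hyv := abs_real_inner_le_norm y v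
  rw [fderiv_fderiv_comp_norm_sq_apply hy u v hφ hφ']
  calc |2 * φ' (‖y‖ ^ 2) * ⟪u, v⟫ + 4 * φ'' (‖y‖ ^ 2) * ⟪y, u⟫ * ⟪y, v⟫|
      ≤ 2 * |φ' (‖y‖ ^ 2)| * |⟪u, v⟫| + 4 * |φ'' (‖y‖ ^ 2)| * |⟪y, u⟫| * |⟪y, v⟫| := by
        refine (abs_add_le _ _).trans_eq ?_
        simp only [abs_mul]
        norm_num
    _ ≤ 2 * (A / ‖y‖) * (‖u‖ * ‖v‖) + 4 * (B / ‖y‖ ^ 3) * (‖y‖ * ‖u‖) * (‖y‖ * ‖v‖) := by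
        gcongr
    _ = (2 * A + 4 * B) * ‖u‖ * ‖v‖ / ‖y‖ := by
        field_simp

end Radial

noncomputable def sqrtOneSubExp (t : ℝ) : ℝ := √(1 - exp (-4 * t))

noncomputable def radialProfile (t : ℝ) : ℝ := 1 / 2 * log (1 + sqrtOneSubExp t)

theorem sqrtOneSubExp_sq {t : ℝ} (ht : 0 ≤ t) : sqrtOneSubExp t ^ 2 = 1 - exp (-4 * t) :=
  sq_sqrt (by simp only [sub_nonneg, exp_le_one_iff]; linarith)

theorem sqrtOneSubExp_pos {t : ℝ} (ht : 0 < t) : 0 < sqrtOneSubExp t :=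
  sqrt_pos.2 (by simp only [sub_pos, exp_lt_one_iff]; linarith)

theorem sqrtOneSubExp_le_one (t : ℝ) : sqrtOneSubExp t ≤ 1 :=
  sqrt_le_one.2 (by linarith [exp_pos (-4 * t)])

theorem sqrt_le_sqrtOneSubExp {t : ℝ} (ht₀ : 0 ≤ t) (ht : t ≤ 3 / 4) :
    √t ≤ sqrtOneSubExp t := by
  refine sqrt_le_sqrt ?_
  -- `exp (-4t) ≤ 1 / (1 + 4t) ≤ 1 - t` on `[0, 3/4]`
  have h_exp : exp (-4 * t) * (1 + 4 * t) ≤ 1 := by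
    calc exp (-4 * t) * (1 + 4 * t) ≤ exp (-4 * t) * exp (4 * t) := by
          gcongr; linarith [add_one_le_exp (4 * t)]
      _ = 1 := by rw [← exp_add]; simp
  nlinarith [exp_pos (-4 * t)]

theorem hasDerivAt_sqrtOneSubExp {t : ℝ} (ht : 0 < t) :
    HasDerivAt sqrtOneSubExp (2 * exp (-4 * t) / sqrtOneSubExp t) t := by
  have h_inner : HasDerivAt (fun t => 1 - exp (-4 * t)) (4 * exp (-4 * t)) t := by
    refine (((hasDerivAt_id t).const_mul (-4)).exp.const_sub 1).congr_deriv ?_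
    simp only [id, mul_one]
    ring
  refine (h_inner.sqrt (sqrt_pos.1 (sqrtOneSubExp_pos ht)).ne').congr_deriv ?_
  unfold sqrtOneSubExp
  ring

theorem hasDerivAt_radialProfile {t : ℝ} (ht : 0 < t) :
    HasDerivAt radialProfile ((sqrtOneSubExp t)⁻¹ - 1) t := by
  have hs := sqrtOneSubExp_pos ht
  refine ((((hasDerivAt_sqrtOneSubExp ht).const_add 1).log (by positivity)).const_mul
    (1 / 2)).congr_deriv ?_
  -- `exp (-4t) = 1 - s² = (1 - s)(1 + s)`
  have h_exp : exp (-4 * t) = 1 - sqrtOneSubExp t ^ 2 := by rw [sqrtOneSubExp_sq ht.le]; ring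
  rw [h_exp]
  field_simp
  ring

theorem hasDerivAt_inv_sqrtOneSubExp_sub_one {t : ℝ} (ht : 0 < t) :
    HasDerivAt (fun t => (sqrtOneSubExp t)⁻¹ - 1)
      (-2 * exp (-4 * t) / sqrtOneSubExp t ^ 3) t := by
  have hs := sqrtOneSubExp_pos ht
  refine (((hasDerivAt_sqrtOneSubExp ht).inv hs.ne').sub_const 1).congr_deriv ?_
  field_simp

theorem abs_inv_sqrtOneSubExp_sub_one_le {t : ℝ} (ht : 0 < t) :
    |(sqrtOneSubExp t)⁻¹ - 1| ≤ (sqrtOneSubExp t)⁻¹ := by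
  have hs := sqrtOneSubExp_pos ht
  rw [abs_of_nonneg (sub_nonneg.2 (one_le_inv₀ hs |>.2 (sqrtOneSubExp_le_one t)))]
  linarith

theorem abs_deriv_inv_sqrtOneSubExp_le {t : ℝ} (ht : 0 ≤ t) :
    |-2 * exp (-4 * t) / sqrtOneSubExp t ^ 3| ≤ 2 / sqrtOneSubExp t ^ 3 := by
  have hs : 0 ≤ sqrtOneSubExp t ^ 3 := pow_nonneg (sqrt_nonneg _) 3
  rw [abs_div, abs_of_nonneg hs]
  refine div_le_div_of_nonneg_right ?_ hs
  have h_exp : exp (-4 * t) ≤ 1 := exp_le_one_iff.2 (by linarith)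
  rw [abs_mul, abs_of_pos (exp_pos _), abs_neg, abs_two]
  linarith

theorem h_second_partials_near_zero_general (m : ℕ) (j k : Fin m) :
    ∃ C δ : ℝ, 0 < C ∧ 0 < δ ∧ ∀ y : EuclideanSpace ℝ (Fin m), 0 < ‖y‖ → ‖y‖ < δ →
      |fderiv ℝ (fun x : EuclideanSpace ℝ (Fin m) =>
          fderiv ℝ (fun w : EuclideanSpace ℝ (Fin m) =>
            (1 / 2) * Real.log (1 + Real.sqrt (1 - Real.exp (-4 * ‖w‖ ^ 2)))) x
            (EuclideanSpace.single k 1)) y (EuclideanSpace.single j 1)| ≤ C / ‖y‖ := by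
  refine ⟨10, 1 / 2, by norm_num, by norm_num, fun y hy₀ hyδ => ?_⟩
  have ht : 0 < ‖y‖ ^ 2 := by positivity
  have hs : ‖y‖ ≤ sqrtOneSubExp (‖y‖ ^ 2) := by
    simpa [sqrt_sq hy₀.le] using sqrt_le_sqrtOneSubExp ht.le (by nlinarith)
  have h := abs_fderiv_fderiv_comp_norm_sq_apply_le (φ := radialProfile)
    (φ'' := fun t => -2 * exp (-4 * t) / sqrtOneSubExp t ^ 3) (norm_pos_iff.1 hy₀)
    (EuclideanSpace.single j 1) (EuclideanSpace.single k 1) (A := 1) (B := 2)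
    (fun _ => hasDerivAt_radialProfile) (hasDerivAt_inv_sqrtOneSubExp_sub_one ht)
    ((abs_inv_sqrtOneSubExp_sub_one_le ht).trans (by rw [one_div]; gcongr))
    ((abs_deriv_inv_sqrtOneSubExp_le ht.le).trans (by gcongr))
  norm_num [PiLp.norm_single] at h
  exact h

theorem h_second_partials_near_zero (m : ℕ) (hm : 2 ≤ m) (j k : Fin m) :
    ∃ C δ : ℝ, 0 < C ∧ 0 < δ ∧ ∀ y : EuclideanSpace ℝ (Fin m), 0 < ‖y‖ → ‖y‖ < δ →
      |fderiv ℝ (fun x : EuclideanSpace ℝ (Fin m) =>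
          fderiv ℝ (fun w : EuclideanSpace ℝ (Fin m) =>
            (1 / 2) * Real.log (1 + Real.sqrt (1 - Real.exp (-4 * ‖w‖ ^ 2)))) x
            (EuclideanSpace.single k 1)) y (EuclideanSpace.single j 1)| ≤ C / ‖y‖ :=
  h_second_partials_near_zero_general m j k
end
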